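/- Let 0 < σ < 1, β ∈ ℝ, 0 < ε < 1, and let f_ε be the regularization f_ε(ρ) = β ρ^σ for ρ ≥ ε² and f_ε(ρ) = ρ Q_ε(ρ) for 0 ≤ ρ < ε², with Q_ε(ρ) = β ε^{2σ-2} Σ_{j=0}^{3} binom(j-σ, j)(1-ρ/ε²)^j. Then there is a constant C depending only on σ and β such that |f(ρ) - f_ε(ρ)| ≤ C ε^{2σ} · 𝟙_{ρ < ε²} for all ρ ≥ 0; in particular f(ρ) = f_ε(ρ) for ρ ≥ ε². -/
import Mathlib


/-- Generalized binomial coefficient `binom(x, j) = x(x-1)⋯(x-j+1)/j!`. -/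
noncomputable def gbinom (x : ℝ) (j : ℕ) : ℝ :=
  (∏ i ∈ Finset.range j, (x - i)) / (Nat.factorial j)

/-- The cubic polynomial `Q_ε(ρ) = β ε^{2σ-2} Σ_{j=0}^{3} binom(j-σ, j)(1-ρ/ε²)^j`. -/
noncomputable def Qreg (σ β ε ρ : ℝ) : ℝ :=
  β * ε ^ (2 * σ - 2) *
    ∑ j ∈ Finset.range 4, gbinom ((j : ℝ) - σ) j * (1 - ρ / ε ^ 2) ^ j

/-- The local regularization `f_ε` of `f(ρ) = β ρ^σ`. -/
noncomputable def freg (σ β ε ρ : ℝ) : ℝ :=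
  if ε ^ 2 ≤ ρ then β * ρ ^ σ else ρ * Qreg σ β ε ρ

/-- `|f(ρ) - f_ε(ρ)| ≤ C ε^{2σ} 𝟙_{ρ < ε²}`; in particular `f = f_ε` on `{ρ ≥ ε²}`. -/
theorem stmt9 (σ β : ℝ) (hσ0 : 0 < σ) (hσ1 : σ < 1) :
    ∃ C : ℝ, 0 < C ∧ ∀ ε : ℝ, 0 < ε → ε < 1 →
      (∀ ρ : ℝ, 0 ≤ ρ →
        |β * ρ ^ σ - freg σ β ε ρ| ≤ C * ε ^ (2 * σ) * (if ρ < ε ^ 2 then 1 else 0))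
      ∧ (∀ ρ : ℝ, ε ^ 2 ≤ ρ → β * ρ ^ σ = freg σ β ε ρ) := by
  set M : ℝ := ∑ j ∈ Finset.range 4, |gbinom ((j : ℝ) - σ) j| with hMdef
  have hM0 : 0 ≤ M := Finset.sum_nonneg fun j _ => abs_nonneg _
  refine ⟨|β| * (1 + M) + 1, by positivity, fun ε hε hε1 => ⟨?_, ?_⟩⟩
  · intro ρ hρ
    by_cases h : ε ^ 2 ≤ ρ
    · simp [freg, h, not_lt.mpr h]
    · push_neg at h
      rw [if_pos h, mul_one]
      have hε2 : (0:ℝ) < ε ^ 2 := by positivity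
      have hεσ : (0:ℝ) < ε ^ (2 * σ) := Real.rpow_pos_of_pos hε _
      have hpow : ε ^ (2 * σ) = ε ^ (2 * σ - 2) * ε ^ 2 := by
        rw [← Real.rpow_natCast ε 2, ← Real.rpow_add hε]
        norm_num
      have hρσ : ρ ^ σ ≤ ε ^ (2 * σ) := by
        calc ρ ^ σ ≤ (ε ^ 2) ^ σ := Real.rpow_le_rpow hρ h.le hσ0.le
          _ = ε ^ (2 * σ) := by
              rw [← Real.rpow_natCast ε 2, ← Real.rpow_mul hε.le]
              norm_num
      have hx : |1 - ρ / ε ^ 2| ≤ 1 := by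
        rw [abs_le]
        constructor
        · have : ρ / ε ^ 2 ≤ 1 := (div_le_one hε2).mpr h.le
          linarith
        · have : 0 ≤ ρ / ε ^ 2 := div_nonneg hρ hε2.le
          linarith
      have hsum : |∑ j ∈ Finset.range 4, gbinom ((j : ℝ) - σ) j * (1 - ρ / ε ^ 2) ^ j| ≤ M := by
        refine (Finset.abs_sum_le_sum_abs _ _).trans ?_
        rw [hMdef]
        refine Finset.sum_le_sum fun j _ => ?_
        rw [abs_mul]
        calc |gbinom ((j : ℝ) - σ) j| * |(1 - ρ / ε ^ 2) ^ j|
            ≤ |gbinom ((j : ℝ) - σ) j| * 1 := by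
              refine mul_le_mul_of_nonneg_left ?_ (abs_nonneg _)
              rw [abs_pow]
              exact pow_le_one₀ (abs_nonneg _) hx
          _ = _ := by ring
      have hQ : |Qreg σ β ε ρ| ≤ |β| * ε ^ (2 * σ - 2) * M := by
        rw [Qreg, abs_mul, abs_mul, abs_of_nonneg (Real.rpow_nonneg hε.le _)]
        exact mul_le_mul_of_nonneg_left hsum (by positivity)
      have hbound : |β * ρ ^ σ - ρ * Qreg σ β ε ρ|
          ≤ |β| * ε ^ (2 * σ) + |β| * ε ^ (2 * σ) * M := by
        refine (abs_sub _ _).trans ?_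
        gcongr ?_ + ?_
        · rw [abs_mul, abs_of_nonneg (Real.rpow_nonneg hρ _)]
          exact mul_le_mul_of_nonneg_left hρσ (abs_nonneg _)
        · rw [abs_mul, abs_of_nonneg hρ]
          calc ρ * |Qreg σ β ε ρ| ≤ ε ^ 2 * (|β| * ε ^ (2 * σ - 2) * M) := by
                exact mul_le_mul h.le hQ (abs_nonneg _) hε2.le
            _ = |β| * ε ^ (2 * σ) * M := by rw [hpow]; ring
      rw [freg, if_neg (not_le.mpr h)]
      calc |β * ρ ^ σ - ρ * Qreg σ β ε ρ| ≤ |β| * ε ^ (2 * σ) + |β| * ε ^ (2 * σ) * M :=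
            hbound
        _ = |β| * (1 + M) * ε ^ (2 * σ) := by ring
        _ ≤ (|β| * (1 + M) + 1) * ε ^ (2 * σ) := by nlinarith
  · intro ρ hρ
    rw [freg, if_pos hρ]
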